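/- arXiv:2301.01466 — 4 statements merged into one kernel-verified Lean document; each statement's English description precedes it below -/
import Mathlib

section
/- The Laplace transform of x^{β-1} E_{α,β}(-λ x^α) satisfies ∫₀^∞ e^{-s x} x^{β-1} E_{α,β}(-λ x^α) dx = s^{α-β}/(λ + s^α) for real s > 0 sufficiently large, where 0 < α < 1, β > 0, λ > 0. -/
/-- The two-parameter Mittag-Leffler function `E_{α,β}(x) = ∑ x^k / Γ(αk+β)`. -/
noncomputable def mittagLeffler2 (α β x : ℝ) : ℝ :=
  ∑' k : ℕ, x ^ k / Real.Gamma (α * k + β)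

/-!
Expand `E_{α,β}(-λ x^α)` termwise. Each term is a Gamma-type integral,
`∫₀^∞ e^{-sx} x^{αk+β-1} dx = Γ(αk+β) / s^{αk+β}`, so the Gamma factors cancel and the
Laplace transform becomes the geometric series
`s^{-β} ∑ (-λ s^{-α})^k = s^{α-β} / (λ + s^α)`.
The termwise integration is justified once `|λ| < s^α`: the integrals of the absolute values
form the convergent geometric series with ratio `|λ| s^{-α}`.
-/

open MeasureTheory Set Real

lemma integral_div_Gamma_mul_rpow_mul_exp_neg_mul {a s : ℝ} (ha : 0 < a) (hs : 0 < s) (c : ℝ) :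
    ∫ x in Ioi 0, c / Gamma a * (x ^ (a - 1) * exp (-(s * x))) = c * (1 / s) ^ a := by
  rw [integral_const_mul, integral_rpow_mul_exp_neg_mul_Ioi ha hs]
  field_simp [(Gamma_pos_of_pos ha).ne']

noncomputable def mittagLeffler2LaplaceTerm (α β lam s : ℝ) (k : ℕ) (x : ℝ) : ℝ :=
  exp (-(s * x)) * (x ^ (β - 1) * ((-(lam * x ^ α)) ^ k / Gamma (α * k + β)))

namespace mittagLeffler2LaplaceTerm

variable {α β lam s : ℝ}

lemma tsum_eq (x : ℝ) :
    ∑' k, mittagLeffler2LaplaceTerm α β lam s k x =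
      exp (-(s * x)) * (x ^ (β - 1) * mittagLeffler2 α β (-(lam * x ^ α))) := by
  simp only [mittagLeffler2LaplaceTerm, mittagLeffler2, div_eq_mul_inv, tsum_mul_left]

lemma eqOn (α β lam s : ℝ) (k : ℕ) :
    EqOn (mittagLeffler2LaplaceTerm α β lam s k)
      (fun x ↦ (-lam) ^ k / Gamma (α * k + β) * (x ^ (α * k + β - 1) * exp (-(s * x))))
      (Ioi 0) := by
  intro x (hx : 0 < x)
  have hpow : (-(lam * x ^ α)) ^ k = (-lam) ^ k * x ^ (α * k) := by
    rw [neg_mul_eq_neg_mul, mul_pow, ← rpow_natCast (x ^ α), ← rpow_mul hx.le]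
  have hexp : x ^ (α * k + β - 1) = x ^ (α * k) * x ^ (β - 1) := by
    rw [← rpow_add hx]; ring_nf
  simp only [mittagLeffler2LaplaceTerm, hpow, hexp]
  ring

lemma norm_eqOn (α β lam s : ℝ) (k : ℕ) (hk : 0 < α * k + β) :
    EqOn (fun x ↦ ‖mittagLeffler2LaplaceTerm α β lam s k x‖)
      (fun x ↦ |lam| ^ k / Gamma (α * k + β) * (x ^ (α * k + β - 1) * exp (-(s * x))))
      (Ioi 0) := by
  intro x (hx : 0 < x)
  dsimp only
  rw [eqOn α β lam s k hx, norm_mul, norm_div, norm_pow, norm_neg, norm_eq_abs, norm_eq_abs,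
    abs_of_pos (Gamma_pos_of_pos hk), norm_of_nonneg (by positivity)]

variable (hs : 0 < s)
include hs

lemma integrableOn (k : ℕ) (hk : 0 < α * k + β) :
    IntegrableOn (mittagLeffler2LaplaceTerm α β lam s k) (Ioi 0) := by
  have hgamma : IntegrableOn (fun x ↦ x ^ (α * k + β - 1) * exp (-(s * x))) (Ioi 0) :=
    .of_integral_ne_zero <| by
      rw [integral_rpow_mul_exp_neg_mul_Ioi hk hs]
      exact (mul_pos (by positivity) (Gamma_pos_of_pos hk)).ne'
  exact IntegrableOn.congr_fun (hgamma.const_mul _) (eqOn α β lam s k).symm measurableSet_Ioi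

lemma integral (k : ℕ) (hk : 0 < α * k + β) :
    ∫ x in Ioi 0, mittagLeffler2LaplaceTerm α β lam s k x =
      (-lam) ^ k * (1 / s) ^ (α * k + β) := by
  rw [setIntegral_congr_fun measurableSet_Ioi (eqOn α β lam s k),
    integral_div_Gamma_mul_rpow_mul_exp_neg_mul hk hs]

lemma integral_norm (k : ℕ) (hk : 0 < α * k + β) :
    ∫ x in Ioi 0, ‖mittagLeffler2LaplaceTerm α β lam s k x‖ =
      |lam| ^ k * (1 / s) ^ (α * k + β) := by
  rw [setIntegral_congr_fun measurableSet_Ioi (norm_eqOn α β lam s k hk),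
    integral_div_Gamma_mul_rpow_mul_exp_neg_mul hk hs]

end mittagLeffler2LaplaceTerm

lemma mul_one_div_rpow_mul_add {s : ℝ} (hs : 0 < s) (c α β : ℝ) (k : ℕ) :
    c ^ k * (1 / s) ^ (α * k + β) = (1 / s) ^ β * (c * (1 / s) ^ α) ^ k := by
  rw [mul_pow, ← rpow_natCast ((1 / s) ^ α), ← rpow_mul (by positivity),
    rpow_add (by positivity)]
  ring

theorem integral_exp_neg_mul_rpow_mul_mittagLeffler2 {α β lam s : ℝ} (hα : 0 ≤ α)
    (hβ : 0 < β) (hs : 0 < s) (hlam : |lam| < s ^ α) :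
    ∫ x in Ioi 0, exp (-(s * x)) * (x ^ (β - 1) * mittagLeffler2 α β (-(lam * x ^ α))) =
      s ^ (α - β) / (lam + s ^ α) := by
  have hk (k : ℕ) : 0 < α * k + β := by positivity
  have hsα : 0 < s ^ α := rpow_pos_of_pos hs α
  have hratio : |lam * (1 / s) ^ α| < 1 := by
    rw [one_div, inv_rpow hs.le, abs_mul, abs_inv, abs_of_pos hsα, ← div_eq_mul_inv]
    exact (div_lt_one hsα).2 hlam
  have hsum_norm : Summable fun k ↦
      ∫ x in Ioi 0, ‖mittagLeffler2LaplaceTerm α β lam s k x‖ := by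
    simp only [mittagLeffler2LaplaceTerm.integral_norm hs _ (hk _), mul_one_div_rpow_mul_add hs]
    refine (summable_geometric_of_abs_lt_one ?_).mul_left _
    rwa [abs_mul, abs_abs, ← abs_mul]
  have hsum : HasSum (fun k ↦ ∫ x in Ioi 0, mittagLeffler2LaplaceTerm α β lam s k x)
      ((1 / s) ^ β * (1 - -lam * (1 / s) ^ α)⁻¹) := by
    simp only [mittagLeffler2LaplaceTerm.integral hs _ (hk _), mul_one_div_rpow_mul_add hs]
    exact (hasSum_geometric_of_abs_lt_one (by rwa [neg_mul, abs_neg])).mul_left _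
  have htermwise := hasSum_integral_of_summable_integral_norm
    (fun k ↦ mittagLeffler2LaplaceTerm.integrableOn hs k (hk k)) hsum_norm
  simp only [mittagLeffler2LaplaceTerm.tsum_eq] at htermwise
  rw [htermwise.unique hsum, one_div, inv_rpow hs.le, inv_rpow hs.le, rpow_sub hs]
  field_simp
  ring

theorem laplace_transform_mittagLeffler2_general (α β lam : ℝ)
    (hα : 0 < α) (hβ : 0 < β) :
    ∃ s₀ > (0 : ℝ), ∀ s > s₀,
      ∫ x in Set.Ioi (0 : ℝ),
          Real.exp (-(s * x)) * (x ^ (β - 1) * mittagLeffler2 α β (-(lam * x ^ α))) =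
        s ^ (α - β) / (lam + s ^ α) := by
  refine ⟨|lam| ^ α⁻¹ + 1, by positivity, fun s hs ↦ ?_⟩
  have hroot : 0 ≤ |lam| ^ α⁻¹ := by positivity
  have hlam : |lam| < s ^ α := by
    calc |lam| = (|lam| ^ α⁻¹) ^ α := by
          rw [← rpow_mul (abs_nonneg lam), inv_mul_cancel₀ hα.ne', rpow_one]
      _ < s ^ α := rpow_lt_rpow hroot (by linarith) hα
  exact integral_exp_neg_mul_rpow_mul_mittagLeffler2 hα.le hβ (hroot.trans_lt (by linarith)) hlam

theorem laplace_transform_mittagLeffler2 (α β lam : ℝ)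
    (hα : 0 < α) (hα1 : α < 1) (hβ : 0 < β) (hlam : 0 < lam) :
    ∃ s₀ > (0 : ℝ), ∀ s > s₀,
      ∫ x in Set.Ioi (0 : ℝ),
          Real.exp (-(s * x)) * (x ^ (β - 1) * mittagLeffler2 α β (-(lam * x ^ α))) =
        s ^ (α - β) / (lam + s ^ α) :=
  laplace_transform_mittagLeffler2_general α β lam hα hβ
end

section
/- The Laplace transform of x^{β-1} E^γ_{α,β}(-λ x^α) equals s^{αγ-β}/(λ + s^α)^γ for real s > 0 sufficiently large, where 0 < α < 1, β > 0, γ > 0, λ > 0. -/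
open Real MeasureTheory Set Filter in
lemma summable_gamma_ratio {γ r : ℝ} (hγ : 0 < γ) (hr0 : 0 ≤ r) (hr1 : r < 1) :
    Summable (fun k : ℕ => Real.Gamma (γ + k) / (Nat.factorial k) * r ^ k) := by
  rcases hr0.eq_or_lt with h | h
  · apply summable_of_ne_finset_zero (s := {0})
    intro k hk
    simp only [Finset.mem_singleton] at hk
    rw [← h, zero_pow hk, mul_zero]
  · have hpos : ∀ n : ℕ, 0 < Real.Gamma (γ + n) / (Nat.factorial n) * r ^ n := by
      intro n
      have : (0:ℝ) < γ + n := by positivity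
      have := Real.Gamma_pos_of_pos this
      positivity
    apply summable_of_ratio_test_tendsto_lt_one hr1
      (Filter.Eventually.of_forall fun n => (hpos n).ne')
    have key : ∀ n : ℕ, ‖Real.Gamma (γ + ↑(n+1)) / (Nat.factorial (n+1)) * r ^ (n+1)‖ /
        ‖Real.Gamma (γ + n) / (Nat.factorial n) * r ^ n‖ = ((γ - 1) * (1/(n+1)) + 1) * r := by
      intro n
      rw [Real.norm_of_nonneg (hpos (n+1)).le, Real.norm_of_nonneg (hpos n).le]
      have hg : Real.Gamma (γ + ↑(n+1)) = (γ + n) * Real.Gamma (γ + n) := by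
        have hne : γ + (n:ℝ) ≠ 0 := by positivity
        push_cast
        rw [← add_assoc, Real.Gamma_add_one hne]
      have hΓne : Real.Gamma (γ + n) ≠ 0 := (Real.Gamma_pos_of_pos (by positivity)).ne'
      have hfne : ((Nat.factorial n : ℝ)) ≠ 0 := by positivity
      have hn1 : ((n:ℝ) + 1) ≠ 0 := by positivity
      rw [hg, Nat.factorial_succ]
      push_cast
      field_simp
      ring
    simp only [key]
    have h1 : Filter.Tendsto (fun n : ℕ => ((γ - 1) * (1/(n+1)) + 1) * r) atTop
        (nhds ((( γ - 1) * 0 + 1) * r)) := by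
      exact (((tendsto_one_div_add_atTop_nhds_zero_nat).const_mul (γ-1)).add
        tendsto_const_nhds).mul_const r
    simpa using h1

open Real MeasureTheory Set Filter in
lemma integrableOn_rpow_exp {a r : ℝ} (ha : 0 < a) (hr : 0 < r) :
    IntegrableOn (fun x : ℝ => x ^ (a - 1) * Real.exp (-(r * x))) (Ioi 0) := by
  have h1 := Real.GammaIntegral_convergent ha
  have h2 : IntegrableOn (fun x : ℝ => Real.exp (-(r * x)) * (r * x) ^ (a - 1)) (Ioi 0) := by
    have := (integrableOn_Ioi_comp_mul_left_iff
      (fun x : ℝ => Real.exp (-x) * x ^ (a - 1)) 0 hr).2 (by simpa using h1)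
    simpa [mul_zero] using this
  have h3 := h2.const_mul ((r : ℝ) ^ (a - 1))⁻¹
  refine MeasureTheory.IntegrableOn.congr_fun h3 (fun x hx => ?_) measurableSet_Ioi
  have hx' : (0:ℝ) < x := hx
  rw [Real.mul_rpow hr.le hx'.le]
  have : (r:ℝ) ^ (a-1) ≠ 0 := (Real.rpow_pos_of_pos hr _).ne'
  field_simp

open Real MeasureTheory Set Filter in
lemma tsum_gamma_binomial {γ u : ℝ} (hγ : 0 < γ) (hu0 : 0 < u) (hu1 : u < 1) :
    ∑' k : ℕ, Real.Gamma (γ + k) / (Nat.factorial k) * (-u) ^ k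
      = Real.Gamma γ * (1 + u) ^ (-γ) := by
  set F : ℕ → ℝ → ℝ := fun k t => ((-u) ^ k / (Nat.factorial k)) *
    (t ^ (γ + k - 1) * Real.exp (-(1 * t))) with hF
  have hint : ∀ k, IntegrableOn (F k) (Ioi 0) := fun k =>
    (integrableOn_rpow_exp (by positivity) one_pos).const_mul _
  have hval : ∀ k, ∫ t in Ioi 0, F k t
      = Real.Gamma (γ + k) / (Nat.factorial k) * (-u) ^ k := by
    intro k
    rw [hF]
    simp only []
    rw [integral_const_mul,
      integral_rpow_mul_exp_neg_mul_Ioi (by positivity : (0:ℝ) < γ + k) one_pos]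
    simp [mul_comm, div_mul_eq_mul_div, mul_div_assoc]
  have hnorm : ∀ k, (∫ t in Ioi 0, ‖F k t‖)
      = Real.Gamma (γ + k) / (Nat.factorial k) * u ^ k := by
    intro k
    have : ∀ t ∈ Ioi (0:ℝ), ‖F k t‖ =
        (u ^ k / (Nat.factorial k)) * (t ^ (γ + k - 1) * Real.exp (-(1 * t))) := by
      intro t ht
      have ht' : (0:ℝ) < t := ht
      rw [hF]
      simp only []
      rw [norm_mul, norm_mul, Real.norm_of_nonneg (Real.rpow_nonneg ht'.le _),
        Real.norm_of_nonneg (Real.exp_pos _).le, norm_div, norm_pow, norm_neg,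
        Real.norm_of_nonneg hu0.le, Real.norm_of_nonneg (by positivity : (0:ℝ) ≤ (Nat.factorial k : ℝ))]
    rw [setIntegral_congr_fun measurableSet_Ioi this, integral_const_mul,
      integral_rpow_mul_exp_neg_mul_Ioi (by positivity : (0:ℝ) < γ + k) one_pos]
    simp [mul_comm, div_mul_eq_mul_div, mul_div_assoc]
  have hsum : Summable fun k => ∫ t in Ioi 0, ‖F k t‖ := by
    simp only [hnorm]
    exact summable_gamma_ratio hγ hu0.le hu1
  have key := MeasureTheory.integral_tsum_of_summable_integral_norm hint hsum
  simp only [hval] at key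
  rw [key]
  have hptwise : ∀ t ∈ Ioi (0:ℝ), (∑' k, F k t)
      = t ^ (γ - 1) * Real.exp (-((1 + u) * t)) := by
    intro t ht
    have ht' : (0:ℝ) < t := ht
    have h1 : ∀ k : ℕ, F k t = (t ^ (γ - 1) * Real.exp (-t)) * ((-u * t) ^ k / (Nat.factorial k)) := by
      intro k
      rw [hF]
      simp only []
      have : t ^ (γ + (k:ℝ) - 1) = t ^ (γ - 1) * t ^ k := by
        rw [← Real.rpow_natCast t k, ← Real.rpow_add ht']
        ring_nf
      rw [this, mul_pow]
      rw [one_mul]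
      ring
    rw [tsum_congr h1, tsum_mul_left]
    have : (∑' k : ℕ, (-u * t) ^ k / (Nat.factorial k)) = Real.exp (-u * t) := by
      rw [Real.exp_eq_exp_ℝ, NormedSpace.exp_eq_tsum_div]
    rw [this, mul_assoc, ← Real.exp_add]
    have : -t + -u * t = -((1 + u) * t) := by ring
    rw [this]
  rw [setIntegral_congr_fun measurableSet_Ioi hptwise,
    integral_rpow_mul_exp_neg_mul_Ioi hγ (by linarith : (0:ℝ) < 1 + u)]
  rw [mul_comm, one_div, ← Real.rpow_neg_one,
    ← Real.rpow_mul (by linarith : (0:ℝ) ≤ 1 + u), neg_one_mul]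

/-- The three-parameter Mittag-Leffler (Prabhakar) function
`E^γ_{α,β}(x) = (1/Γ(γ)) ∑ Γ(γ+k)/(k! Γ(αk+β)) x^k`. -/
noncomputable def mittagLeffler3 (α β γ x : ℝ) : ℝ :=
  (1 / Real.Gamma γ) *
    ∑' k : ℕ, Real.Gamma (γ + k) / (Nat.factorial k * Real.Gamma (α * k + β)) * x ^ k

open Real MeasureTheory Set Filter in
theorem laplace_transform_mittagLeffler3 (α β γ lam : ℝ)
    (hα : 0 < α) (hα1 : α < 1) (hβ : 0 < β) (hγ : 0 < γ) (hlam : 0 < lam) :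
    ∃ s₀ > (0 : ℝ), ∀ s > s₀,
      ∫ x in Set.Ioi (0 : ℝ),
          Real.exp (-(s * x)) * (x ^ (β - 1) * mittagLeffler3 α β γ (-(lam * x ^ α))) =
        s ^ (α * γ - β) / (lam + s ^ α) ^ γ := by
  refine ⟨lam ^ (1/α) + 1, by positivity, fun s hs => ?_⟩
  have hs0 : (0:ℝ) < s := lt_trans (by positivity) hs
  have hsα : lam < s ^ α := by
    have h1 : lam ^ (1/α) < s := lt_trans (lt_add_one _) hs
    have h2 := Real.rpow_lt_rpow (by positivity) h1 hα
    rwa [← Real.rpow_mul hlam.le, one_div_mul_cancel hα.ne', Real.rpow_one] at h2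
  have hsp : (0:ℝ) < s ^ α := Real.rpow_pos_of_pos hs0 α
  set u : ℝ := lam / s ^ α with hu
  have hu0 : 0 < u := div_pos hlam hsp
  have hu1 : u < 1 := (div_lt_one hsp).2 hsα
  set F : ℕ → ℝ → ℝ := fun k x =>
    (Real.Gamma (γ + k) / (Nat.factorial k * Real.Gamma (α * k + β)) * (-lam) ^ k) *
      (x ^ (α * k + β - 1) * Real.exp (-(s * x))) with hFdef
  have hak : ∀ k : ℕ, (0:ℝ) < α * k + β := fun k => by positivity
  have hΓak : ∀ k : ℕ, (0:ℝ) < Real.Gamma (α * k + β) := fun k => Real.Gamma_pos_of_pos (hak k)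
  have hint : ∀ k, IntegrableOn (F k) (Ioi 0) := fun k =>
    (integrableOn_rpow_exp (hak k) hs0).const_mul _
  have hsplit : ∀ k : ℕ, s ^ (α * k + β) = (s ^ α) ^ k * s ^ β := by
    intro k
    rw [Real.rpow_add hs0, Real.rpow_mul hs0.le, Real.rpow_natCast]
  have hnegu : ∀ k : ℕ, (-u) ^ k = (-lam) ^ k / (s ^ α) ^ k := by
    intro k
    rw [hu, ← neg_div, div_pow]
  have hval : ∀ k, (∫ x in Ioi 0, F k x)
      = (Real.Gamma (γ + k) / (Nat.factorial k) * (-u) ^ k) * s ^ (-β) := by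
    intro k
    rw [hFdef]
    simp only []
    rw [integral_const_mul, integral_rpow_mul_exp_neg_mul_Ioi (hak k) hs0]
    rw [Real.rpow_neg hs0.le, hnegu k, one_div, ← Real.rpow_neg_one,
      ← Real.rpow_mul hs0.le, neg_one_mul, Real.rpow_neg hs0.le, hsplit k]
    have h1 : Real.Gamma (α * k + β) ≠ 0 := (hΓak k).ne'
    have h2 : ((Nat.factorial k : ℝ)) ≠ 0 := by positivity
    have h3 : ((s ^ α) ^ k : ℝ) ≠ 0 := by positivity
    have h4 : (s ^ β : ℝ) ≠ 0 := by positivity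
    field_simp
  have hnval : ∀ k, (∫ x in Ioi 0, ‖F k x‖)
      = (Real.Gamma (γ + k) / (Nat.factorial k) * u ^ k) * s ^ (-β) := by
    intro k
    have heq : ∀ x ∈ Ioi (0:ℝ), ‖F k x‖ =
        (Real.Gamma (γ + k) / (Nat.factorial k * Real.Gamma (α * k + β)) * lam ^ k) *
          (x ^ (α * k + β - 1) * Real.exp (-(s * x))) := by
      intro x hx
      have hx' : (0:ℝ) < x := hx
      rw [hFdef]
      simp only []
      rw [norm_mul, norm_mul, norm_mul, Real.norm_of_nonneg (Real.rpow_nonneg hx'.le _),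
        Real.norm_of_nonneg (Real.exp_pos _).le, norm_div, norm_pow, norm_neg,
        Real.norm_of_nonneg hlam.le,
        Real.norm_of_nonneg (le_of_lt (by positivity : (0:ℝ) < Real.Gamma (γ + k))),
        Real.norm_of_nonneg (le_of_lt (by positivity : (0:ℝ) < (Nat.factorial k : ℝ) * Real.Gamma (α * k + β)))]
    rw [setIntegral_congr_fun measurableSet_Ioi heq, integral_const_mul,
      integral_rpow_mul_exp_neg_mul_Ioi (hak k) hs0]
    rw [Real.rpow_neg hs0.le, one_div, ← Real.rpow_neg_one,
      ← Real.rpow_mul hs0.le, neg_one_mul, Real.rpow_neg hs0.le, hsplit k]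
    have h1 : Real.Gamma (α * k + β) ≠ 0 := (hΓak k).ne'
    have h2 : ((Nat.factorial k : ℝ)) ≠ 0 := by positivity
    have h3 : ((s ^ α) ^ k : ℝ) ≠ 0 := by positivity
    have h4 : (s ^ β : ℝ) ≠ 0 := by positivity
    rw [hu, div_pow]
    field_simp
  have hsumm : Summable fun k => ∫ x in Ioi 0, ‖F k x‖ := by
    simp only [hnval]
    exact (summable_gamma_ratio hγ hu0.le hu1).mul_right _
  have key := MeasureTheory.integral_tsum_of_summable_integral_norm hint hsumm
  have hptwise : ∀ x ∈ Ioi (0:ℝ),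
      Real.exp (-(s * x)) * (x ^ (β - 1) * mittagLeffler3 α β γ (-(lam * x ^ α)))
        = (1 / Real.Gamma γ) * ∑' k, F k x := by
    intro x hx
    have hx' : (0:ℝ) < x := hx
    have hterm : ∀ k : ℕ, F k x = (Real.exp (-(s * x)) * x ^ (β - 1)) *
        (Real.Gamma (γ + k) / (Nat.factorial k * Real.Gamma (α * k + β)) *
          (-(lam * x ^ α)) ^ k) := by
      intro k
      rw [hFdef]
      simp only []
      have e1 : x ^ (α * k + β - 1) = (x ^ α) ^ k * x ^ (β - 1) := by
        rw [show α * k + β - 1 = α * k + (β - 1) by ring, Real.rpow_add hx',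
          Real.rpow_mul hx'.le, Real.rpow_natCast]
      have e2 : (-(lam * x ^ α)) ^ k = (-lam) ^ k * (x ^ α) ^ k := by
        rw [show -(lam * x ^ α) = (-lam) * x ^ α by ring, mul_pow]
      rw [e1, e2]
      ring
    rw [tsum_congr hterm, tsum_mul_left, mittagLeffler3]
    ring
  rw [setIntegral_congr_fun measurableSet_Ioi hptwise, integral_const_mul, ← key]
  simp only [hval]
  rw [tsum_mul_right, tsum_gamma_binomial hγ hu0 hu1]
  have hΓγ : Real.Gamma γ ≠ 0 := (Real.Gamma_pos_of_pos hγ).ne'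
  rw [show (1 / Real.Gamma γ) * (Real.Gamma γ * (1 + u) ^ (-γ) * s ^ (-β))
      = (1 + u) ^ (-γ) * s ^ (-β) by field_simp]
  have h1u : (1:ℝ) + u = (lam + s ^ α) / s ^ α := by
    rw [hu]; field_simp; ring
  have hA : (0:ℝ) < lam + s ^ α := by positivity
  rw [h1u, Real.rpow_neg (by positivity), Real.div_rpow hA.le hsp.le,
    Real.rpow_neg hs0.le]
  rw [show s ^ (α * γ - β) = s ^ (α * γ) * (s ^ β)⁻¹ by
    rw [show α * γ - β = α * γ + (-β) by ring, Real.rpow_add hs0, Real.rpow_neg hs0.le]]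
  rw [Real.rpow_mul hs0.le]
  have hb : ((s ^ α) ^ γ : ℝ) ≠ 0 := by positivity
  have hc : ((lam + s ^ α) ^ γ : ℝ) ≠ 0 := by positivity
  field_simp
end

section
/- Let f_α be the density of the one-sided α-stable distribution with Laplace transform e^{-s^α}, 0 < α < 1, and F_α its distribution function. Define F_α(x | t) = F_α(x t^{-1/α}). Then for λ > 0, the function x ↦ 1 - λ ∫₀^∞ (1 - F_α(x t^{-1/α})) e^{-λ t} dt is a distribution function whose Laplace transform over x is s ↦ 1/s - s^{α-1}/(λ + s^α)·(1/1) ; equivalently, λ ∫₀^∞ (1 - F_α(x t^{-1/α})) e^{-λ t} dt = E_α(-λ x^α) for all x > 0 (Feller's result). -/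
/-!
If `S` has density `f`, then `1 - F (x * t ^ (-1/α)) = P((x / S) ^ α < t)`, so by Fubini the
Laplace integral in `t` becomes `λ⁻¹ * E[exp (-(λ * x ^ α * S ^ (-α)))]`. Expanding the exponential,
everything reduces to the negative moments `E[S ^ (-a)]`: writing `Γ(a) * u ^ (-a)` as
`∫ s ^ (a - 1) * exp (-(s * u)) ds` and swapping integrals gives
`Γ(a) * E[S ^ (-a)] = ∫ s ^ (a - 1) * exp (-s ^ α) ds = Γ(a / α) / α`, i.e.
`E[S ^ (-α k)] = k! / Γ(α k + 1)`. Termwise integration is justified because the Mittag-Leffler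
series converges absolutely, by the ratio test and `y ^ α * Γ(y + 1) ≤ Γ(y + 1 + α)`, a consequence
of the log-convexity of `Γ`.
-/

/-- The one-parameter Mittag-Leffler function `E_α(x) = ∑ x^k / Γ(αk+1)`. -/
noncomputable def mittagLeffler (α x : ℝ) : ℝ :=
  ∑' k : ℕ, x ^ k / Real.Gamma (α * k + 1)

open MeasureTheory Set Real Filter

theorem Real.rpow_mul_Gamma_add_one_le {α y : ℝ} (hα : 0 < α) (hy : 0 < y) :
    y ^ α * Gamma (y + 1) ≤ Gamma (y + 1 + α) := by
  have hslope := convexOn_log_Gamma.slope_mono_adjacent (mem_Ioi.2 hy)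
    (mem_Ioi.2 (by linarith : 0 < y + 1 + α)) (lt_add_one y) (lt_add_of_pos_right _ hα)
  have hlog : log (Gamma (y + 1)) = log y + log (Gamma y) := by
    rw [Gamma_add_one hy.ne', log_mul hy.ne' (Gamma_pos_of_pos hy).ne']
  simp only [Function.comp_apply, add_sub_cancel_left, div_one, hlog] at hslope
  rw [le_div_iff₀ hα] at hslope
  rw [← log_le_log_iff (by positivity) (Gamma_pos_of_pos (by positivity)),
    log_mul (by positivity) (Gamma_pos_of_pos (by positivity)).ne', log_rpow hy, hlog]
  linarith

theorem summable_pow_div_Gamma_mul_add_one {α : ℝ} (hα : 0 < α) (c : ℝ) :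
    Summable fun n : ℕ => c ^ n / Gamma (α * n + 1) := by
  have hgrowth : Tendsto (fun n : ℕ => (α * n) ^ α) atTop atTop :=
    (tendsto_rpow_atTop hα).comp (tendsto_natCast_atTop_atTop.const_mul_atTop hα)
  refine summable_of_ratio_norm_eventually_le one_half_lt_one ?_
  filter_upwards [hgrowth.eventually_ge_atTop (2 * |c|), eventually_gt_atTop 0] with n hn hn0
  have hαn : 0 < α * n := by positivity
  have hΓ : 0 < Gamma (α * n + 1) := Gamma_pos_of_pos (by linarith)
  have hstep : 2 * |c| * Gamma (α * n + 1) ≤ Gamma (α * ↑(n + 1) + 1) := by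
    calc 2 * |c| * Gamma (α * n + 1) ≤ (α * n) ^ α * Gamma (α * n + 1) := by gcongr
      _ ≤ Gamma (α * n + 1 + α) := rpow_mul_Gamma_add_one_le hα hαn
      _ = Gamma (α * ↑(n + 1) + 1) := by push_cast; ring_nf
  have hΓ' : 0 < Gamma (α * ↑(n + 1) + 1) := Gamma_pos_of_pos (by positivity)
  rw [norm_div, norm_div, norm_pow, norm_pow, norm_of_nonneg hΓ.le, norm_of_nonneg hΓ'.le,
    div_le_iff₀ hΓ', pow_succ]
  calc ‖c‖ ^ n * ‖c‖
      = 1 / 2 * (‖c‖ ^ n / Gamma (α * n + 1)) * (2 * |c| * Gamma (α * n + 1)) := by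
        rw [norm_eq_abs]; field_simp
    _ ≤ 1 / 2 * (‖c‖ ^ n / Gamma (α * n + 1)) * Gamma (α * ↑(n + 1) + 1) := by gcongr

theorem setIntegral_Ioi_eq_sub_setIntegral_Ioc {f : ℝ → ℝ} {a y : ℝ} (hf : IntegrableOn f (Ioi a))
    (hy : a ≤ y) : ∫ u in Ioi y, f u = (∫ u in Ioi a, f u) - ∫ u in Ioc a y, f u := by
  have := setIntegral_union (Ioc_disjoint_Ioi le_rfl) measurableSet_Ioi
    (hf.mono_set Ioc_subset_Ioi_self) (hf.mono_set (Ioi_subset_Ioi hy))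
  rw [Ioc_union_Ioi_eq_Ioi hy] at this
  linarith

theorem mul_rpow_neg_one_div_lt_iff {α x t u : ℝ} (hα : 0 < α) (hx : 0 ≤ x) (ht : 0 < t)
    (hu : 0 < u) : x * t ^ (-(1 / α)) < u ↔ (x / u) ^ α < t := by
  rw [rpow_neg ht.le, ← div_eq_mul_inv, div_lt_iff₀ (rpow_pos_of_pos ht _), ← div_lt_iff₀' hu,
    one_div, lt_rpow_inv_iff_of_pos (div_nonneg hx hu.le) ht.le hα]

theorem integral_setIntegral_preimage_mul_comm {α β : Type*} [MeasurableSpace α]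
    [MeasurableSpace β] {μ : Measure α} {ν : Measure β} [SFinite μ] [SFinite ν]
    {f : β → ℝ} {g : α → ℝ} (hf : Integrable f ν) (hg : Integrable g μ)
    {S : Set (α × β)} (hS : MeasurableSet S) :
    ∫ t, (∫ u in Prod.mk t ⁻¹' S, f u ∂ν) * g t ∂μ =
      ∫ u, f u * ∫ t in (fun t => (t, u)) ⁻¹' S, g t ∂μ ∂ν := by
  have hK : Integrable (S.indicator fun p => g p.1 * f p.2) (μ.prod ν) :=
    (hg.mul_prod hf).indicator hS
  convert integral_integral_swap (f := fun t u => S.indicator (fun p => g p.1 * f p.2) (t, u)) hK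
    using 3 with t u
  · rw [← integral_indicator (measurable_prodMk_left hS), ← integral_mul_const]
    congr 1 with u
    by_cases h : (t, u) ∈ S <;> simp [h, mul_comm]
  · rw [← integral_indicator (measurable_prodMk_right hS), ← integral_const_mul]
    congr 1 with t
    by_cases h : (t, u) ∈ S <;> simp [h, mul_comm]

theorem Gamma_mul_integral_mul_rpow_neg {f : ℝ → ℝ} (hf : IntegrableOn f (Ioi 0))
    (hf_nonneg : ∀ u > 0, 0 ≤ f u) {a : ℝ} (ha : 0 < a)
    (hL : IntegrableOn (fun s => s ^ (a - 1) * ∫ u in Ioi 0, exp (-(s * u)) * f u) (Ioi 0)) :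
    IntegrableOn (fun u => f u * u ^ (-a)) (Ioi 0) ∧
      Gamma a * ∫ u in Ioi 0, f u * u ^ (-a) =
        ∫ s in Ioi 0, s ^ (a - 1) * ∫ u in Ioi 0, exp (-(s * u)) * f u := by
  set ν : Measure ℝ := volume.restrict (Ioi 0)
  set W : ℝ × ℝ → ℝ := fun p => p.1 ^ (a - 1) * (exp (-(p.1 * p.2)) * f p.2)
  have hW_nonneg : ∀ s, 0 < s → ∀ᵐ u ∂ν, 0 ≤ W (s, u) :=
    fun s hs => (ae_restrict_iff' measurableSet_Ioi).2 <| ae_of_all _ fun u hu =>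
      mul_nonneg (rpow_nonneg hs.le _) (mul_nonneg (exp_pos _).le (hf_nonneg u hu))
  have hslice : ∀ s, 0 < s → Integrable (fun u => exp (-(s * u)) * f u) ν := fun s hs =>
    hf.bdd_mul (c := 1) (by fun_prop) <| (ae_restrict_iff' measurableSet_Ioi).2 <|
      ae_of_all _ fun u hu => by
        rw [norm_of_nonneg (exp_pos _).le, exp_le_one_iff, neg_nonpos]
        exact mul_nonneg hs.le (le_of_lt hu)
  have hW_norm : ∀ s, 0 < s →
      ∫ u, ‖W (s, u)‖ ∂ν = s ^ (a - 1) * ∫ u in Ioi 0, exp (-(s * u)) * f u := fun s hs => by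
    rw [integral_congr_ae ((hW_nonneg s hs).mono fun u hu => norm_of_nonneg hu)]
    exact integral_const_mul (s ^ (a - 1)) _
  have hW : Integrable W (ν.prod ν) := by
    have hW_meas : AEStronglyMeasurable W (ν.prod ν) :=
      (by fun_prop : Measurable fun p : ℝ × ℝ => p.1 ^ (a - 1)).aestronglyMeasurable.mul
        ((by fun_prop : Continuous fun p : ℝ × ℝ => exp (-(p.1 * p.2))).aestronglyMeasurable.mul
          hf.aestronglyMeasurable.comp_snd)
    refine (integrable_prod_iff hW_meas).2 ⟨?_, ?_⟩
    · exact (ae_restrict_iff' measurableSet_Ioi).2 <| ae_of_all _ fun s hs => by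
        simpa only [W] using (hslice s hs).const_mul (s ^ (a - 1))
    · exact hL.congr <| (ae_restrict_iff' measurableSet_Ioi).2 <| ae_of_all _ fun s hs =>
        (hW_norm s hs).symm
  have hinner : ∀ u, 0 < u → ∫ s, W (s, u) ∂ν = Gamma a * (f u * u ^ (-a)) := fun u hu => by
    simp only [W, mul_comm _ u, ← mul_assoc]
    rw [integral_mul_const, integral_rpow_mul_exp_neg_mul_Ioi ha hu, one_div, inv_rpow hu.le,
      ← rpow_neg hu.le]
    ring
  have hinner_ae : (fun u => ∫ s, W (s, u) ∂ν) =ᵐ[ν] fun u => Gamma a * (f u * u ^ (-a)) :=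
    (ae_restrict_iff' measurableSet_Ioi).2 <| ae_of_all _ hinner
  refine ⟨(integrable_const_mul_iff (Gamma_pos_of_pos ha).ne'.isUnit _).1
    (hW.swap.integral_prod_left.congr hinner_ae), ?_⟩
  rw [← integral_const_mul, ← integral_congr_ae hinner_ae, ← integral_integral_swap hW]
  exact setIntegral_congr_fun measurableSet_Ioi fun s hs => by
    rw [← integral_const_mul]

theorem integral_mul_rpow_neg_of_laplace_eq_exp_neg_rpow {α : ℝ} {f : ℝ → ℝ} (hα : 0 < α)
    (hf : IntegrableOn f (Ioi 0)) (hf_nonneg : ∀ u > 0, 0 ≤ f u)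
    (hf_lt : ∀ s > 0, ∫ t in Ioi 0, exp (-(s * t)) * f t = exp (-(s ^ α)))
    {a : ℝ} (ha : 0 < a) :
    IntegrableOn (fun u => f u * u ^ (-a)) (Ioi 0) ∧
      ∫ u in Ioi 0, f u * u ^ (-a) = Gamma (a / α) / (α * Gamma a) := by
  have hL : EqOn (fun s => s ^ (a - 1) * ∫ u in Ioi 0, exp (-(s * u)) * f u)
      (fun s => s ^ (a - 1) * exp (-s ^ α)) (Ioi 0) := fun s hs => by
    simp only [hf_lt s hs]
  obtain ⟨hint, hmellin⟩ := Gamma_mul_integral_mul_rpow_neg hf hf_nonneg ha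
    ((integrableOn_rpow_mul_exp_neg_rpow (by linarith) hα).congr_fun hL.symm measurableSet_Ioi)
  refine ⟨hint, ?_⟩
  rw [setIntegral_congr_fun measurableSet_Ioi hL, integral_rpow_mul_exp_neg_rpow hα (by linarith),
    sub_add_cancel] at hmellin
  have hΓ := (Gamma_pos_of_pos ha).ne'
  field_simp at hmellin
  rw [eq_div_iff (mul_ne_zero hα.ne' hΓ)]
  linear_combination hmellin

theorem integral_mul_rpow_neg_mul_natCast_of_laplace_eq_exp_neg_rpow {α : ℝ} {f : ℝ → ℝ}
    (hα : 0 < α) (hf : IntegrableOn f (Ioi 0)) (hf_nonneg : ∀ u > 0, 0 ≤ f u)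
    (hf_lt : ∀ s > 0, ∫ t in Ioi 0, exp (-(s * t)) * f t = exp (-(s ^ α)))
    (hf_prob : ∫ u in Ioi 0, f u = 1) (k : ℕ) :
    IntegrableOn (fun u => f u * u ^ (-(α * k))) (Ioi 0) ∧
      ∫ u in Ioi 0, f u * u ^ (-(α * k)) = k.factorial / Gamma (α * k + 1) := by
  cases k with
  | zero => simpa using ⟨hf, hf_prob⟩
  | succ m =>
    have ha : 0 < α * (m + 1 : ℕ) := by positivity
    refine (integral_mul_rpow_neg_of_laplace_eq_exp_neg_rpow hα hf hf_nonneg hf_lt ha).imp_right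
      fun h => h.trans ?_
    rw [mul_div_cancel_left₀ _ hα.ne', Gamma_add_one ha.ne', Nat.cast_succ, Gamma_nat_eq_factorial,
      Nat.factorial_succ]
    have hΓ := (Gamma_pos_of_pos ha).ne'
    push_cast
    field_simp

theorem integral_mul_exp_neg_mul_rpow_neg_eq_mittagLeffler {α : ℝ} {f : ℝ → ℝ} (hα : 0 < α)
    (hf : IntegrableOn f (Ioi 0)) (hf_nonneg : ∀ u > 0, 0 ≤ f u)
    (hf_prob : ∫ u in Ioi 0, f u = 1)
    (hf_lt : ∀ s > 0, ∫ t in Ioi 0, exp (-(s * t)) * f t = exp (-(s ^ α))) {c : ℝ} (hc : 0 ≤ c) :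
    ∫ u in Ioi 0, f u * exp (-(c * u ^ (-α))) = mittagLeffler α (-c) := by
  have hmoment := integral_mul_rpow_neg_mul_natCast_of_laplace_eq_exp_neg_rpow hα hf hf_nonneg
    hf_lt hf_prob
  set F : ℕ → ℝ → ℝ := fun k u => (-c) ^ k / k.factorial * (f u * u ^ (-(α * k)))
  have hF_int : ∀ k, IntegrableOn (F k) (Ioi 0) := fun k => (hmoment k).1.const_mul _
  have hF_norm : ∀ k, ∫ u in Ioi 0, ‖F k u‖ = c ^ k / Gamma (α * k + 1) := fun k => by
    have : EqOn (fun u => ‖F k u‖) (fun u => c ^ k / k.factorial * (f u * u ^ (-(α * k))))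
        (Ioi 0) := fun u hu => by
      simp only [F, norm_mul, norm_div, norm_pow, norm_neg, Real.norm_of_nonneg hc,
        Real.norm_of_nonneg (hf_nonneg u hu), Real.norm_of_nonneg (rpow_nonneg (le_of_lt hu) _)]
      simp
    rw [setIntegral_congr_fun measurableSet_Ioi this, integral_const_mul, (hmoment k).2]
    field_simp
  have hseries : EqOn (fun u => f u * exp (-(c * u ^ (-α)))) (fun u => ∑' k, F k u) (Ioi 0) :=
    fun u hu => by
      simp only [F, exp_eq_exp_ℝ, NormedSpace.exp_eq_tsum_div, ← tsum_mul_left]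
      congr 1 with k
      rw [neg_mul_eq_neg_mul, mul_pow, ← rpow_natCast (u ^ (-α)), ← rpow_mul (le_of_lt hu),
        neg_mul]
      ring
  rw [setIntegral_congr_fun measurableSet_Ioi hseries, ← integral_tsum_of_summable_integral_norm
    hF_int (by simpa only [hF_norm] using summable_pow_div_Gamma_mul_add_one hα c)]
  refine tsum_congr fun k => ?_
  rw [integral_const_mul, (hmoment k).2]
  field_simp

theorem integral_tail_rpow_mul_eq_integral_mul_tail_rpow {α x : ℝ} {f g : ℝ → ℝ} (hα : 0 < α)
    (hx : 0 ≤ x) (hf : IntegrableOn f (Ioi 0)) (hg : IntegrableOn g (Ioi 0)) :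
    ∫ t in Ioi 0, (∫ u in Ioi (x * t ^ (-(1 / α))), f u) * g t =
      ∫ u in Ioi 0, f u * ∫ t in Ioi ((x / u) ^ α), g t := by
  let S : Set (ℝ × ℝ) := {p | x * p.1 ^ (-(1 / α)) < p.2}
  have hS : MeasurableSet S := measurableSet_lt (by fun_prop) measurable_snd
  have hslice_u : ∀ t > 0, Prod.mk t ⁻¹' S ∩ Ioi 0 = Ioi (x * t ^ (-(1 / α))) := fun t ht =>
    inter_eq_left.2 (Ioi_subset_Ioi (mul_nonneg hx (rpow_nonneg ht.le _)) :
      Ioi (x * t ^ (-(1 / α))) ⊆ Ioi 0)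
  have hslice_t : ∀ u > 0, (fun t => (t, u)) ⁻¹' S ∩ Ioi 0 = Ioi ((x / u) ^ α) := fun u hu => by
    ext t
    simp only [S, mem_inter_iff, mem_preimage, mem_ofPred_eq, mem_Ioi]
    refine ⟨fun ⟨h, ht⟩ => (mul_rpow_neg_one_div_lt_iff hα hx ht hu).1 h, fun h => ?_⟩
    have ht : 0 < t := (rpow_nonneg (div_nonneg hx hu.le) α).trans_lt h
    exact ⟨(mul_rpow_neg_one_div_lt_iff hα hx ht hu).2 h, ht⟩
  convert integral_setIntegral_preimage_mul_comm hf hg hS using 1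
  · refine setIntegral_congr_fun measurableSet_Ioi fun t ht => ?_
    rw [Measure.restrict_restrict (measurable_prodMk_left hS), hslice_u t ht]
  · refine setIntegral_congr_fun measurableSet_Ioi fun u hu => ?_
    rw [Measure.restrict_restrict (measurable_prodMk_right hS), hslice_t u hu]

theorem feller_representation_general (α lam : ℝ) (hα : 0 < α) (hlam : 0 < lam)
    (f F : ℝ → ℝ)
    (hf_nonneg : ∀ x > (0 : ℝ), 0 ≤ f x)
    (hf_prob : ∫ x in Set.Ioi (0 : ℝ), f x = 1)
    (hf_lt : ∀ s > (0 : ℝ),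
      ∫ t in Set.Ioi (0 : ℝ), Real.exp (-(s * t)) * f t = Real.exp (-(s ^ α)))
    (hF : ∀ x : ℝ, F x = ∫ u in Set.Ioc (0 : ℝ) x, f u) :
    ∀ x > (0 : ℝ),
      lam * ∫ t in Set.Ioi (0 : ℝ), (1 - F (x * t ^ (-(1 / α)))) * Real.exp (-(lam * t)) =
        mittagLeffler α (-(lam * x ^ α)) := by
  intro x hx
  have hf : IntegrableOn f (Ioi 0) := Integrable.of_integral_ne_zero (by simp [hf_prob])
  have hexp : IntegrableOn (fun t => exp (-(lam * t))) (Ioi 0) := by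
    simpa only [neg_mul] using exp_neg_integrableOn_Ioi 0 hlam
  calc lam * ∫ t in Ioi 0, (1 - F (x * t ^ (-(1 / α)))) * exp (-(lam * t))
      = lam * ∫ t in Ioi 0, (∫ u in Ioi (x * t ^ (-(1 / α))), f u) * exp (-(lam * t)) := by
        congr 1
        refine setIntegral_congr_fun measurableSet_Ioi fun t ht => ?_
        rw [setIntegral_Ioi_eq_sub_setIntegral_Ioc hf
          (mul_nonneg hx.le (rpow_nonneg (le_of_lt ht) _)), hf_prob, hF]
    _ = lam * ∫ u in Ioi 0, f u * ∫ t in Ioi ((x / u) ^ α), exp (-(lam * t)) := by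
        rw [integral_tail_rpow_mul_eq_integral_mul_tail_rpow hα hx.le hf hexp]
    _ = ∫ u in Ioi 0, f u * exp (-(lam * x ^ α * u ^ (-α))) := by
        rw [← integral_const_mul]
        refine setIntegral_congr_fun measurableSet_Ioi fun u hu => ?_
        simp_rw [← neg_mul]
        rw [integral_exp_mul_Ioi (neg_neg_of_pos hlam), div_rpow hx.le (le_of_lt hu),
          rpow_neg (le_of_lt hu)]
        field_simp
    _ = mittagLeffler α (-(lam * x ^ α)) :=
        integral_mul_exp_neg_mul_rpow_neg_eq_mittagLeffler hα hf hf_nonneg hf_prob hf_lt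
          (by positivity)

theorem feller_representation (α lam : ℝ) (hα : 0 < α) (hα1 : α < 1) (hlam : 0 < lam)
    (f F : ℝ → ℝ)
    (hf_nonneg : ∀ x > (0 : ℝ), 0 ≤ f x)
    (hf_prob : ∫ x in Set.Ioi (0 : ℝ), f x = 1)
    (hf_lt : ∀ s > (0 : ℝ),
      ∫ t in Set.Ioi (0 : ℝ), Real.exp (-(s * t)) * f t = Real.exp (-(s ^ α)))
    (hF : ∀ x : ℝ, F x = ∫ u in Set.Ioc (0 : ℝ) x, f u) :
    ∀ x > (0 : ℝ),
      lam * ∫ t in Set.Ioi (0 : ℝ), (1 - F (x * t ^ (-(1 / α)))) * Real.exp (-(lam * t)) =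
        mittagLeffler α (-(lam * x ^ α)) :=
  feller_representation_general α lam hα hlam f F hf_nonneg hf_prob hf_lt hF
end

section
/- Let 0 < α < 1 and let f_α(x|t) be the scaled stable density. For μ, λ > 0 define m_α(x|μ,λ) = (λ^μ/Γ(μ)) ∫₀^∞ f_α(x|t) t^{μ-1} e^{-λ t} dt. Then the Laplace transform satisfies ∫₀^∞ e^{-sx} x m_α(x|μ,λ) dx = λ^μ μ α s^{α-1}/(λ+s^α)^{μ+1} for s > 0. -/
/-!
Differentiating `∫ e^{-st} f(t) dt = e^{-s^α}` under the integral sign gives the first moment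
`∫ t e^{-st} f(t) dt = α s^{α-1} e^{-s^α}`; after the substitution `y = x t^{-1/α}` this says that
`x f_α(x | t)` has Laplace transform `α s^{α-1} t e^{-s^α t}`. By Tonelli the Laplace transform of
`x m_α(x | μ, λ)` is the integral of this against the gamma weight, which is the Gamma integral
`∫ t^μ e^{-(λ + s^α) t} dt = Γ(μ + 1) / (λ + s^α)^{μ+1}`.

The integrand of the double integral is a.e. strongly measurable because `f` is (its Laplace
transform does not vanish, so `e^{-st} f` is integrable) and `(x, t) ↦ x t^{-1/α}` is
quasi-measure-preserving on `(0, ∞)²`.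
-/

open MeasureTheory Set Real Filter Topology

theorem aestronglyMeasurable_of_integral_exp_neg_mul_ne_zero {μ : Measure ℝ} {g : ℝ → ℝ} {s : ℝ}
    (h : ∫ t, exp (-(s * t)) * g t ∂μ ≠ 0) : AEStronglyMeasurable g μ := by
  have hexp : Continuous fun t => exp (s * t) := by fun_prop
  refine (hexp.aestronglyMeasurable.mul
    (Integrable.of_integral_ne_zero h).aestronglyMeasurable).congr (ae_of_all _ fun t => ?_)
  simp [← mul_assoc, ← exp_add]

theorem hasDerivAt_integral_exp_neg_mul {g : ℝ → ℝ} {s : ℝ} (hs : 0 < s)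
    (hg : ∀ u > 0, IntegrableOn (fun t => exp (-(u * t)) * g t) (Ioi 0)) :
    IntegrableOn (fun t => t * exp (-(s * t)) * g t) (Ioi 0) ∧
      HasDerivAt (fun u => ∫ t in Ioi 0, exp (-(u * t)) * g t)
        (-∫ t in Ioi 0, t * exp (-(s * t)) * g t) s := by
  have hdiff := hasDerivAt_integral_of_dominated_loc_of_deriv_le
    (F := fun u t => exp (-(u * t)) * g t) (F' := fun u t => -t * (exp (-(u * t)) * g t))
    (x₀ := s) (s := Metric.ball s (s / 2)) (bound := fun t => (4 / s) * ‖exp (-(s / 4 * t)) * g t‖)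
    (Metric.ball_mem_nhds _ (by positivity))
    ((eventually_gt_nhds hs).mono fun u hu => (hg u hu).aestronglyMeasurable) (hg s hs)
    (continuous_neg.aestronglyMeasurable.mul (hg s hs).aestronglyMeasurable) ?_
    ((hg (s / 4) (by positivity)).norm.const_mul _) ?_
  · simp only [neg_mul, integral_neg, ← mul_assoc] at hdiff
    exact ⟨by simpa [IntegrableOn] using hdiff.1.neg, hdiff.2⟩
  · filter_upwards [ae_restrict_mem measurableSet_Ioi] with t (ht : 0 < t) u hu
    rw [Metric.mem_ball, dist_eq, abs_lt] at hu
    have hdecay : exp (-(u * t)) ≤ exp (-(s / 4 * t)) * exp (-(s / 4 * t)) := by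
      rw [← exp_add, exp_le_exp]; nlinarith
    have hmoment : t * exp (-(s / 4 * t)) ≤ 4 / s := by
      have := mul_exp_neg_le_exp_neg_one (s / 4 * t)
      have := exp_le_one_iff.2 (neg_nonpos.2 zero_le_one)
      rw [le_div_iff₀ hs]
      nlinarith
    rw [norm_mul, norm_mul, norm_mul, norm_neg, Real.norm_of_nonneg ht.le,
      Real.norm_of_nonneg (exp_pos _).le, Real.norm_of_nonneg (exp_pos _).le]
    calc t * (exp (-(u * t)) * ‖g t‖)
        ≤ t * (exp (-(s / 4 * t)) * exp (-(s / 4 * t)) * ‖g t‖) := by gcongr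
      _ = (t * exp (-(s / 4 * t))) * (exp (-(s / 4 * t)) * ‖g t‖) := by ring
      _ ≤ 4 / s * (exp (-(s / 4 * t)) * ‖g t‖) := by gcongr
  · refine ae_of_all _ fun t u _ => ?_
    exact (((hasDerivAt_id u).mul_const t).neg.exp.mul_const (g t)).congr_deriv (by simp; ring)

theorem integral_mul_exp_neg_mul_of_laplace_eq_exp_neg_rpow {g : ℝ → ℝ} {α s : ℝ} (hs : 0 < s)
    (hg : ∀ u > 0, ∫ t in Ioi 0, exp (-(u * t)) * g t = exp (-(u ^ α))) :
    IntegrableOn (fun t => t * exp (-(s * t)) * g t) (Ioi 0) ∧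
      ∫ t in Ioi 0, t * exp (-(s * t)) * g t = α * s ^ (α - 1) * exp (-(s ^ α)) := by
  obtain ⟨hint, hderiv⟩ := hasDerivAt_integral_exp_neg_mul hs fun u hu =>
    Integrable.of_integral_ne_zero (by rw [hg u hu]; exact (exp_pos _).ne')
  have hlaplace : (fun u => ∫ t in Ioi 0, exp (-(u * t)) * g t) =ᶠ[𝓝 s] fun u => exp (-(u ^ α)) :=
    (eventually_gt_nhds hs).mono hg
  have hexp : HasDerivAt (fun u => exp (-(u ^ α))) (exp (-(s ^ α)) * -(α * s ^ (α - 1))) s :=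
    (hasDerivAt_rpow_const (Or.inl hs.ne')).neg.exp
  refine ⟨hint, ?_⟩
  linarith [(hderiv.congr_of_eventuallyEq hlaplace.symm).unique hexp]

theorem quasiMeasurePreserving_of_hasDerivWithinAt {φ φ' : ℝ → ℝ} {s t : Set ℝ}
    (hs : MeasurableSet s) (hφ : Measurable φ) (hφ' : Measurable φ')
    (hderiv : ∀ x ∈ s, HasDerivWithinAt φ (φ' x) s x) (hφ'_ne : ∀ x ∈ s, φ' x ≠ 0)
    (hinj : InjOn φ s) (hmaps : MapsTo φ s t) :
    Measure.QuasiMeasurePreserving φ (volume.restrict s) (volume.restrict t) := by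
  refine ⟨hφ, Measure.AbsolutelyContinuous.mk fun N hN hN0 => ?_⟩
  have himage : ∫⁻ x in φ '' s, N.indicator 1 x = 0 := by
    rw [lintegral_indicator_one hN, Measure.restrict_apply hN]
    exact measure_mono_null (inter_subset_inter_right _ (image_subset_iff.2 hmaps))
      ((Measure.restrict_apply hN).symm.trans hN0)
  rw [lintegral_image_eq_lintegral_abs_deriv_mul hs hderiv hinj,
    lintegral_eq_zero_iff (by fun_prop)] at himage
  rw [Measure.map_apply hφ hN, ← compl_mem_ae_iff]
  filter_upwards [himage, ae_restrict_mem hs] with x hx hxs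
  simpa [hφ'_ne x hxs] using hx

theorem quasiMeasurePreserving_const_mul_rpow_Ioi {c p : ℝ} (hc : 0 < c) (hp : p ≠ 0) :
    Measure.QuasiMeasurePreserving (fun t => c * t ^ p)
      (volume.restrict (Ioi 0)) (volume.restrict (Ioi 0)) :=
  quasiMeasurePreserving_of_hasDerivWithinAt (φ' := fun t => c * (p * t ^ (p - 1)))
    measurableSet_Ioi (by fun_prop) (by fun_prop)
    (fun t ht => ((hasDerivAt_rpow_const (Or.inl (ne_of_gt ht))).const_mul c).hasDerivWithinAt)
    (fun t ht => by have := rpow_pos_of_pos ht (p - 1); positivity)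
    (fun t (ht : 0 < t) u (hu : 0 < u) htu => rpow_left_injOn hp ht.le hu.le
      (mul_left_cancel₀ hc.ne' htu))
    (fun t ht => by have := rpow_pos_of_pos ht p; simp only [mem_Ioi]; positivity)

theorem quasiMeasurePreserving_mul_rpow_Ioi_prod {p : ℝ} (hp : p ≠ 0) :
    Measure.QuasiMeasurePreserving (fun q : ℝ × ℝ => q.1 * q.2 ^ p)
      ((volume.restrict (Ioi 0)).prod (volume.restrict (Ioi 0))) (volume.restrict (Ioi 0)) :=
  QuasiMeasurePreserving.prod_of_right (by fun_prop)
    ((ae_restrict_mem measurableSet_Ioi).mono fun _ hx =>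
      quasiMeasurePreserving_const_mul_rpow_Ioi hx hp)

theorem integral_integral_swap_of_nonneg {X Y : Type*} [MeasurableSpace X] [MeasurableSpace Y]
    {μ : Measure X} {ν : Measure Y} [SFinite μ] [SFinite ν] {F : X → Y → ℝ}
    (hF : AEStronglyMeasurable (Function.uncurry F) (μ.prod ν))
    (hF_nonneg : ∀ᵐ y ∂ν, ∀ᵐ x ∂μ, 0 ≤ F x y) (hF_sec : ∀ᵐ y ∂ν, Integrable (F · y) μ)
    (hF_int : Integrable (fun y => ∫ x, F x y ∂μ) ν) :
    ∫ x, ∫ y, F x y ∂ν ∂μ = ∫ y, ∫ x, F x y ∂μ ∂ν := by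
  refine integral_integral_swap ((integrable_prod_iff' hF).2 ⟨hF_sec, hF_int.congr ?_⟩)
  filter_upwards [hF_nonneg] with y hy
  exact integral_congr_ae (hy.mono fun x hx => (Real.norm_of_nonneg hx).symm)

/-- `f_α(x | t)`. -/
noncomputable def scaledDensity (f : ℝ → ℝ) (α t x : ℝ) : ℝ :=
  f (x * t ^ (-(1 / α))) * t ^ (-(1 / α))

theorem integral_exp_neg_mul_mul_scaledDensity {f : ℝ → ℝ} {α s t : ℝ} (hα : 0 < α) (hs : 0 < s)
    (ht : 0 < t) (hf : ∀ u > 0, ∫ y in Ioi 0, exp (-(u * y)) * f y = exp (-(u ^ α))) :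
    IntegrableOn (fun x => exp (-(s * x)) * x * scaledDensity f α t x) (Ioi 0) ∧
      ∫ x in Ioi 0, exp (-(s * x)) * x * scaledDensity f α t x =
        α * s ^ (α - 1) * (t * exp (-(s ^ α * t))) := by
  set r := t ^ (1 / α)
  have hr : 0 < r := rpow_pos_of_pos ht _
  have hrα : r ^ α = t := by rw [← rpow_mul ht.le, one_div_mul_cancel hα.ne', rpow_one]
  have hc : t ^ (-(1 / α)) = r⁻¹ := rpow_neg ht.le _
  obtain ⟨hmoment_int, hmoment⟩ :=
    integral_mul_exp_neg_mul_of_laplace_eq_exp_neg_rpow (s := s * r) (by positivity) hf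
  set G : ℝ → ℝ := fun y => y * exp (-(s * r * y)) * f y
  -- substituting `y = x t^{-1/α}` turns the integrand into the first moment at `s t^{1/α}`
  have hsubst : (fun x => exp (-(s * x)) * x * scaledDensity f α t x) = fun x => G (x * r⁻¹) := by
    ext x
    simp only [G, scaledDensity, hc]
    field_simp
  have hint := integrableOn_Ioi_comp_mul_right_iff G 0 (inv_pos.2 hr)
  have hval := integral_comp_mul_right_Ioi G 0 (inv_pos.2 hr)
  rw [zero_mul] at hint hval
  rw [hsubst, hint, hval, hmoment, smul_eq_mul, inv_inv, mul_rpow hs.le hr.le,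
    mul_rpow hs.le hr.le, rpow_sub_one hr.ne', hrα]
  refine ⟨hmoment_int, ?_⟩
  field_simp

theorem integral_exp_neg_mul_mul_integral_scaledDensity_mul {f w : ℝ → ℝ} {α s : ℝ}
    (hα : 0 < α) (hs : 0 < s) (hf_nonneg : ∀ x > 0, 0 ≤ f x)
    (hf : ∀ u > 0, ∫ y in Ioi 0, exp (-(u * y)) * f y = exp (-(u ^ α)))
    (hw_meas : AEStronglyMeasurable w (volume.restrict (Ioi 0))) (hw_nonneg : ∀ t > 0, 0 ≤ w t)
    (hw_int : IntegrableOn (fun t => t * exp (-(s ^ α * t)) * w t) (Ioi 0)) :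
    ∫ x in Ioi 0, exp (-(s * x)) * (x * ∫ t in Ioi 0, scaledDensity f α t x * w t) =
      α * s ^ (α - 1) * ∫ t in Ioi 0, t * exp (-(s ^ α * t)) * w t := by
  have hf_meas : AEStronglyMeasurable f (volume.restrict (Ioi 0)) :=
    aestronglyMeasurable_of_integral_exp_neg_mul_ne_zero (s := 1)
      (by rw [hf 1 one_pos]; exact (exp_pos _).ne')
  have hsection := fun t (ht : 0 < t) => integral_exp_neg_mul_mul_scaledDensity hα hs ht hf
  have hmeas : AEStronglyMeasurable
      (Function.uncurry fun x t => exp (-(s * x)) * x * scaledDensity f α t x * w t)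
      ((volume.restrict (Ioi 0)).prod (volume.restrict (Ioi 0))) := by
    exact ((Measurable.aestronglyMeasurable (by fun_prop)).mul
      ((hf_meas.comp_quasiMeasurePreserving
        (quasiMeasurePreserving_mul_rpow_Ioi_prod (neg_ne_zero.2 (by positivity)))).mul
      (Measurable.aestronglyMeasurable (by fun_prop)))).mul hw_meas.comp_snd
  have hinner : ∀ t ∈ Ioi (0 : ℝ),
      ∫ x in Ioi 0, exp (-(s * x)) * x * scaledDensity f α t x * w t =
        α * s ^ (α - 1) * (t * exp (-(s ^ α * t)) * w t) := fun t ht => by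
    rw [integral_mul_const, (hsection t ht).2, mul_assoc]
  have hnonneg : ∀ t > 0, ∀ x > 0, 0 ≤ exp (-(s * x)) * x * scaledDensity f α t x * w t :=
    fun t ht x hx => by
      have := rpow_pos_of_pos ht (-(1 / α))
      have := hf_nonneg (x * t ^ (-(1 / α))) (by positivity)
      have := hw_nonneg t ht
      unfold scaledDensity
      positivity
  calc ∫ x in Ioi 0, exp (-(s * x)) * (x * ∫ t in Ioi 0, scaledDensity f α t x * w t)
      = ∫ x in Ioi 0, ∫ t in Ioi 0, exp (-(s * x)) * x * scaledDensity f α t x * w t := by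
        refine integral_congr_ae (ae_of_all _ fun x => ?_)
        simp only [← integral_const_mul, mul_assoc]
    _ = ∫ t in Ioi 0, ∫ x in Ioi 0, exp (-(s * x)) * x * scaledDensity f α t x * w t := by
        refine integral_integral_swap_of_nonneg hmeas ?_ ?_ ?_
        · filter_upwards [ae_restrict_mem measurableSet_Ioi] with t ht
          filter_upwards [ae_restrict_mem measurableSet_Ioi] with x hx
          exact hnonneg t ht x hx
        · filter_upwards [ae_restrict_mem measurableSet_Ioi] with t ht
          exact (hsection t ht).1.mul_const (w t)
        · exact IntegrableOn.congr_fun (hw_int.const_mul _) (fun t ht => (hinner t ht).symm)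
            measurableSet_Ioi
    _ = α * s ^ (α - 1) * ∫ t in Ioi 0, t * exp (-(s ^ α * t)) * w t := by
        rw [setIntegral_congr_fun measurableSet_Ioi hinner, integral_const_mul]

theorem integral_mul_exp_neg_mul_mul_rpow_mul_exp_neg_mul {μ lam b : ℝ} (hμ : 0 < μ)
    (hlamb : 0 < lam + b) :
    IntegrableOn (fun t => t * exp (-(b * t)) * (t ^ (μ - 1) * exp (-(lam * t)))) (Ioi 0) ∧
      ∫ t in Ioi 0, t * exp (-(b * t)) * (t ^ (μ - 1) * exp (-(lam * t))) =
        μ * Gamma μ / (lam + b) ^ (μ + 1) := by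
  have hpt : ∀ t ∈ Ioi (0 : ℝ), t * exp (-(b * t)) * (t ^ (μ - 1) * exp (-(lam * t))) =
      t ^ (μ + 1 - 1) * exp (-((lam + b) * t)) := fun t (ht : 0 < t) => by
    rw [add_sub_cancel_right, rpow_sub_one ht.ne', add_mul, neg_add, exp_add]
    field_simp
  refine ⟨IntegrableOn.congr_fun ?_ (fun t ht => (hpt t ht).symm) measurableSet_Ioi, ?_⟩
  · convert integrableOn_rpow_mul_exp_neg_mul_rpow (s := μ + 1 - 1) (p := 1) (by linarith)
      one_pos hlamb using 4
    simp only [rpow_one]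
    ring
  · rw [setIntegral_congr_fun measurableSet_Ioi hpt,
      integral_rpow_mul_exp_neg_mul_Ioi (by linarith) hlamb, Gamma_add_one hμ.ne',
      one_div, inv_rpow hlamb.le]
    ring

theorem laplace_gamma_mixture_general (α μ lam : ℝ) (hα : 0 < α)
    (hμ : 0 < μ) (hlam : 0 < lam) (f : ℝ → ℝ)
    (hf_nonneg : ∀ x > (0 : ℝ), 0 ≤ f x)
    (hf_lt : ∀ s > (0 : ℝ),
      ∫ t in Set.Ioi (0 : ℝ), Real.exp (-(s * t)) * f t = Real.exp (-(s ^ α))) :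
    ∀ s > (0 : ℝ),
      ∫ x in Set.Ioi (0 : ℝ),
          Real.exp (-(s * x)) *
            (x * (lam ^ μ / Real.Gamma μ *
              ∫ t in Set.Ioi (0 : ℝ),
                f (x * t ^ (-(1 / α))) * t ^ (-(1 / α)) * t ^ (μ - 1) *
                  Real.exp (-(lam * t)))) =
        lam ^ μ * μ * α * s ^ (α - 1) / (lam + s ^ α) ^ (μ + 1) := by
  intro s hs
  obtain ⟨hweight_int, hweight⟩ :=
    integral_mul_exp_neg_mul_mul_rpow_mul_exp_neg_mul hμ (add_pos hlam (rpow_pos_of_pos hs α))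
  have hmixture := integral_exp_neg_mul_mul_integral_scaledDensity_mul hα hs hf_nonneg hf_lt
    (w := fun t => t ^ (μ - 1) * exp (-(lam * t))) (Measurable.aestronglyMeasurable (by fun_prop))
    (fun t ht => by have := rpow_pos_of_pos ht (μ - 1); positivity) hweight_int
  calc _ = lam ^ μ / Gamma μ * ∫ x in Ioi 0, exp (-(s * x)) * (x * ∫ t in Ioi 0,
              scaledDensity f α t x * (t ^ (μ - 1) * exp (-(lam * t)))) := by
        rw [← integral_const_mul]
        congr 1; ext x
        simp only [scaledDensity, mul_assoc]
        ring
    _ = _ := by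
        rw [hmixture, hweight]
        field_simp [(Gamma_pos_of_pos hμ).ne']

theorem laplace_gamma_mixture (α μ lam : ℝ) (hα : 0 < α) (hα1 : α < 1)
    (hμ : 0 < μ) (hlam : 0 < lam) (f : ℝ → ℝ)
    (hf_nonneg : ∀ x > (0 : ℝ), 0 ≤ f x)
    (hf_prob : ∫ x in Set.Ioi (0 : ℝ), f x = 1)
    (hf_lt : ∀ s > (0 : ℝ),
      ∫ t in Set.Ioi (0 : ℝ), Real.exp (-(s * t)) * f t = Real.exp (-(s ^ α))) :
    ∀ s > (0 : ℝ),
      ∫ x in Set.Ioi (0 : ℝ),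
          Real.exp (-(s * x)) *
            (x * (lam ^ μ / Real.Gamma μ *
              ∫ t in Set.Ioi (0 : ℝ),
                f (x * t ^ (-(1 / α))) * t ^ (-(1 / α)) * t ^ (μ - 1) *
                  Real.exp (-(lam * t)))) =
        lam ^ μ * μ * α * s ^ (α - 1) / (lam + s ^ α) ^ (μ + 1) :=
  laplace_gamma_mixture_general α μ lam hα hμ hlam f hf_nonneg hf_lt
end
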